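/- For all density matrices ρ and σ on ℂ^n, the trace distance is bounded by the fidelity via Δ(ρ,σ) ≤ √(1 − F(ρ,σ)²). -/

import Mathlib

/-!
Diagonalize `ρ - σ` by a unitary `U` and let `p`, `q` be the diagonals of `ρ`, `σ` in that basis.
Then `Δ(ρ,σ) = ½ ∑ |pᵢ - qᵢ|`, while `F(ρ,σ) ≤ ∑ √(pᵢ qᵢ)`: writing `F(ρ,σ) = Re Tr (V† √ρ √σ)`
for a contraction `V` (polar decomposition), each diagonal term is bounded by Cauchy–Schwarz.
The classical inequality
`(∑ |pᵢ - qᵢ|)² ≤ ∑ (√pᵢ - √qᵢ)² · ∑ (√pᵢ + √qᵢ)² = 4 - 4 (∑ √(pᵢ qᵢ))²` finishes the proof.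
-/

open Matrix Kronecker ComplexOrder

/-- The square root of a positive semidefinite matrix (the former `Matrix.PosSemidef.sqrt`). -/
noncomputable def Matrix.PosSemidef.sqrt {n : Type*} [Fintype n] [DecidableEq n] {A : Matrix n n ℂ}
    (hA : A.PosSemidef) : Matrix n n ℂ :=
  hA.1.eigenvectorUnitary.1 * diagonal (fun i => ((Real.sqrt (hA.1.eigenvalues i) : ℝ) : ℂ)) *
    (star hA.1.eigenvectorUnitary : Matrix n n ℂ)

/-- The trace norm `‖A‖₁ = Tr √(Aᴴ A)` of a complex matrix. -/
noncomputable def traceNorm {n : Type*} [Fintype n] [DecidableEq n] (A : Matrix n n ℂ) : ℝ :=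
  ((Matrix.posSemidef_conjTranspose_mul_self A).sqrt.trace).re

/-- The trace distance `Δ(ρ,σ) = ‖ρ - σ‖₁ / 2`. -/
noncomputable def traceDist {n : Type*} [Fintype n] [DecidableEq n] (ρ σ : Matrix n n ℂ) : ℝ :=
  traceNorm (ρ - σ) / 2

open scoped Classical in
/-- Positive semidefinite square root (junk value `0` on non-PSD matrices). -/
noncomputable def psdSqrt {n : Type*} [Fintype n] [DecidableEq n] (A : Matrix n n ℂ) :
    Matrix n n ℂ :=
  if h : A.PosSemidef then h.sqrt else 0

/-- The fidelity `F(ρ,σ) = ‖√ρ √σ‖₁`. -/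
noncomputable def fidelity {n : Type*} [Fintype n] [DecidableEq n] (ρ σ : Matrix n n ℂ) : ℝ :=
  traceNorm (psdSqrt ρ * psdSqrt σ)

/-- A density matrix: positive semidefinite with trace 1. -/
def IsDensityMatrix {n : Type*} [Fintype n] [DecidableEq n] (ρ : Matrix n n ℂ) : Prop :=
  ρ.PosSemidef ∧ ρ.trace = 1

/-- The projector `|b⟩⟨b|` on ℂ². -/
noncomputable def proj (b : Bool) : Matrix Bool Bool ℂ := Matrix.single b b 1

/-- The strong oblivious transfer channel `F_{(x₀,x₁)}`. -/
noncomputable def sotChannel (x₀ x₁ : Bool) (ρ : Matrix (Bool × Bool) (Bool × Bool) ℂ) :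
    Matrix (Bool × Bool) (Bool × Bool) ℂ :=
  ∑ i : Bool, ∑ i' : Bool,
    ρ (i, i') (i, i') •
      (((1/2 : ℂ) • (1 : Matrix Bool Bool ℂ)) ⊗ₖ proj (xor (bif xor i i' then x₁ else x₀) i'))

open scoped MatrixOrder

lemma sq_sum_abs_sub_le {ι : Type*} (s : Finset ι) {p q : ι → ℝ} (hp : ∀ i ∈ s, 0 ≤ p i)
    (hq : ∀ i ∈ s, 0 ≤ q i) :
    (∑ i ∈ s, |p i - q i|) ^ 2 ≤
      (∑ i ∈ s, p i + ∑ i ∈ s, q i) ^ 2 - 4 * (∑ i ∈ s, √(p i) * √(q i)) ^ 2 := by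
  have hfactor : ∀ i ∈ s, |p i - q i| = |√(p i) - √(q i)| * (√(p i) + √(q i)) := by
    intro i hi
    rw [← abs_of_nonneg (by positivity : 0 ≤ √(p i) + √(q i)), ← abs_mul, mul_comm,
      ← sq_sub_sq, Real.sq_sqrt (hp i hi), Real.sq_sqrt (hq i hi)]
  have hminus : ∀ i ∈ s, |√(p i) - √(q i)| ^ 2 = p i + q i - 2 * (√(p i) * √(q i)) := by
    intro i hi
    rw [sq_abs, sub_sq, Real.sq_sqrt (hp i hi), Real.sq_sqrt (hq i hi)]
    ring
  have hplus : ∀ i ∈ s, (√(p i) + √(q i)) ^ 2 = p i + q i + 2 * (√(p i) * √(q i)) := by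
    intro i hi
    rw [add_sq, Real.sq_sqrt (hp i hi), Real.sq_sqrt (hq i hi)]
    ring
  calc (∑ i ∈ s, |p i - q i|) ^ 2
      = (∑ i ∈ s, |√(p i) - √(q i)| * (√(p i) + √(q i))) ^ 2 := by
        rw [Finset.sum_congr rfl hfactor]
    _ ≤ (∑ i ∈ s, |√(p i) - √(q i)| ^ 2) * ∑ i ∈ s, (√(p i) + √(q i)) ^ 2 :=
      Finset.sum_mul_sq_le_sq_mul_sq _ _ _
    _ = _ := by
      simp only [Finset.sum_congr rfl hminus, Finset.sum_congr rfl hplus, Finset.sum_sub_distrib,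
        Finset.sum_add_distrib, ← Finset.mul_sum]
      ring

lemma re_conjTranspose_mul_apply_le {m n : Type*} [Fintype m] (A B : Matrix m n ℂ) (i : n) :
    ((Aᴴ * B) i i).re ≤ √((Aᴴ * A) i i).re * √((Bᴴ * B) i i).re := by
  have hinner (X Y : Matrix m n ℂ) :
      (Xᴴ * Y) i i = inner ℂ (WithLp.toLp 2 fun j => X j i) (WithLp.toLp 2 fun j => Y j i) := by
    rw [EuclideanSpace.inner_toLp_toLp]
    simp [mul_apply, dotProduct, mul_comm]
  have hcs := re_inner_le_norm (𝕜 := ℂ) (WithLp.toLp 2 fun j => A j i : EuclideanSpace ℂ m)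
    (WithLp.toLp 2 fun j => B j i : EuclideanSpace ℂ m)
  rw [norm_eq_sqrt_re_inner (𝕜 := ℂ), norm_eq_sqrt_re_inner (𝕜 := ℂ)] at hcs
  rw [hinner, hinner, hinner]
  exact hcs

lemma Matrix.re_apply_le_of_le {n : Type*} {A B : Matrix n n ℂ} (h : A ≤ B) (i : n) :
    (A i i).re ≤ (B i i).re := by
  simpa using Complex.re_le_re (Matrix.le_iff.mp h).diag_nonneg (x := 0) (y := (B - A) i i)

section

variable {n : Type*} [Fintype n] [DecidableEq n]

-- `⟨uᵢ|A|uᵢ⟩` for the columns `uᵢ` of `U`: the outcome distribution of measuring `A` in that basis.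
def measurementProb (U : unitaryGroup n ℂ) (A : Matrix n n ℂ) (i : n) : ℝ :=
  ((star (U : Matrix n n ℂ) * A * U) i i).re

lemma measurementProb_nonneg (U : unitaryGroup n ℂ) {A : Matrix n n ℂ} (hA : A.PosSemidef)
    (i : n) : 0 ≤ measurementProb U A i := by
  have h := Complex.re_le_re ((hA.conjTranspose_mul_mul_same (U : Matrix n n ℂ)).diag_nonneg (i := i))
  rwa [← star_eq_conjTranspose] at h

lemma sum_measurementProb (U : unitaryGroup n ℂ) (A : Matrix n n ℂ) :
    ∑ i, measurementProb U A i = A.trace.re := by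
  simp only [measurementProb, ← Complex.re_sum]
  change (trace (star (U : Matrix n n ℂ) * A * (U : Matrix n n ℂ))).re = _
  rw [trace_mul_cycle, mem_unitaryGroup_iff.mp U.2, one_mul]

lemma measurementProb_sub (U : unitaryGroup n ℂ) (A B : Matrix n n ℂ) (i : n) :
    measurementProb U (A - B) i = measurementProb U A i - measurementProb U B i := by
  simp [measurementProb, mul_sub, sub_mul]

lemma measurementProb_eigenvectorUnitary {A : Matrix n n ℂ} (hA : A.IsHermitian) (i : n) :
    measurementProb hA.eigenvectorUnitary A i = hA.eigenvalues i := by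
  have hdiag := hA.conjStarAlgAut_star_eigenvectorUnitary
  rw [Unitary.conjStarAlgAut_star_apply] at hdiag
  simp [measurementProb, hdiag]

lemma Matrix.IsHermitian.trace_cfc {A : Matrix n n ℂ} (hA : A.IsHermitian) (f : ℝ → ℝ) :
    (cfc f A).trace = ∑ i, (f (hA.eigenvalues i) : ℂ) := by
  rw [hA.cfc_eq, IsHermitian.cfc, Unitary.conjStarAlgAut_apply, trace_mul_cycle,
    Unitary.coe_star_mul_self, one_mul, trace_diagonal]
  rfl

lemma Matrix.PosSemidef.sqrt_eq_cfc {A : Matrix n n ℂ} (hA : A.PosSemidef) :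
    hA.sqrt = cfc Real.sqrt A := by
  rw [hA.1.cfc_eq]
  rfl

lemma psdSqrt_eq_cfc {A : Matrix n n ℂ} (hA : A.PosSemidef) : psdSqrt A = cfc Real.sqrt A := by
  rw [psdSqrt, dif_pos hA, PosSemidef.sqrt_eq_cfc]

lemma cfc_sqrt_mul_self {A : Matrix n n ℂ} (hA : 0 ≤ A) :
    cfc Real.sqrt A * cfc Real.sqrt A = A := by
  conv_rhs => rw [← cfc_id' ℝ A]
  rw [← cfc_mul ..]
  exact cfc_congr fun x hx => Real.mul_self_sqrt (spectrum_nonneg_of_nonneg hA hx)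

lemma traceNorm_eq_re_trace_cfc_sqrt (A : Matrix n n ℂ) :
    traceNorm A = (cfc Real.sqrt (Aᴴ * A)).trace.re := by
  rw [traceNorm, PosSemidef.sqrt_eq_cfc]

lemma traceNorm_nonneg (A : Matrix n n ℂ) : 0 ≤ traceNorm A := by
  rw [traceNorm_eq_re_trace_cfc_sqrt, (posSemidef_conjTranspose_mul_self A).1.trace_cfc]
  simp only [Complex.re_sum, Complex.ofReal_re]
  exact Finset.sum_nonneg fun i _ => Real.sqrt_nonneg _

lemma fidelity_nonneg (ρ σ : Matrix n n ℂ) : 0 ≤ fidelity ρ σ := traceNorm_nonneg _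

lemma traceNorm_eq_sum_abs_eigenvalues {A : Matrix n n ℂ} (hA : A.IsHermitian) :
    traceNorm A = ∑ i, |hA.eigenvalues i| := by
  have hsq : Aᴴ * A = cfc (· ^ 2 : ℝ → ℝ) A := by
    rw [hA.eq, cfc_pow_id A 2 hA.isSelfAdjoint, sq]
  rw [traceNorm_eq_re_trace_cfc_sqrt, hsq, ← cfc_comp Real.sqrt _ A, hA.trace_cfc]
  simp [Real.sqrt_sq_eq_abs]

lemma traceDist_eq_sum_abs_sub {ρ σ : Matrix n n ℂ} (hρσ : (ρ - σ).IsHermitian) :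
    traceDist ρ σ = (∑ i, |measurementProb hρσ.eigenvectorUnitary ρ i -
      measurementProb hρσ.eigenvectorUnitary σ i|) / 2 := by
  simp only [traceDist, traceNorm_eq_sum_abs_eigenvalues hρσ,
    ← measurementProb_eigenvectorUnitary hρσ, measurementProb_sub]

/-- A partial isometry `V = M (M†M)^{-1/2}` from the polar decomposition of `M`. -/
lemma exists_contraction_conjTranspose_mul_eq_cfc_sqrt (M : Matrix n n ℂ) :
    ∃ V : Matrix n n ℂ, Vᴴ * V ≤ 1 ∧ Vᴴ * M = cfc Real.sqrt (Mᴴ * M) := by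
  set K := Mᴴ * M
  have hK : IsSelfAdjoint K := (posSemidef_conjTranspose_mul_self M).1
  -- the junk value `(√0)⁻¹ = 0` makes `G` the pseudo-inverse of `√K`
  set G := cfc (fun x : ℝ => (√x)⁻¹) K
  have hG : Gᴴ = G := (cfc_predicate _ K : IsSelfAdjoint G).star_eq
  have hcont : ContinuousOn (fun x : ℝ => (√x)⁻¹) (spectrum ℝ K) :=
    K.finite_real_spectrum.continuousOn _
  have hGK : G * K = cfc Real.sqrt K := by
    conv_lhs => rw [← cfc_id' ℝ K]
    rw [← cfc_mul ..]
    refine cfc_congr fun x _ => ?_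
    rw [← div_eq_inv_mul, Real.div_sqrt]
  refine ⟨M * G, ?_, ?_⟩
  · have hVV : (M * G)ᴴ * (M * G) = cfc (fun x : ℝ => √x * (√x)⁻¹) K := by
      rw [conjTranspose_mul, hG, cfc_mul .., ← hGK]
      simp only [K, G, mul_assoc]
    rw [hVV]
    exact cfc_le_one _ K fun x _ => mul_inv_le_one
  · rw [conjTranspose_mul, hG, mul_assoc, hGK]

lemma traceNorm_mul_le_sum_sqrt_mul_sqrt (X Y : Matrix n n ℂ) (U : unitaryGroup n ℂ) :
    traceNorm (X * Y) ≤
      ∑ i, √(measurementProb U (Xᴴ * X) i) * √(measurementProb U (Y * Yᴴ) i) := by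
  obtain ⟨V, hV, hVM⟩ := exists_contraction_conjTranspose_mul_eq_cfc_sqrt (X * Y)
  set A := V * Yᴴ * U
  set B := X * U
  have htr : (Vᴴ * (X * Y)).trace = (Aᴴ * B).trace := by
    calc (Vᴴ * (X * Y)).trace = (Y * Vᴴ * X).trace := by
          rw [← mul_assoc, trace_mul_comm, mul_assoc]
      _ = (star (U : Matrix n n ℂ) * (Y * Vᴴ * X) * U).trace := by
        rw [trace_mul_cycle (star (U : Matrix n n ℂ)), mem_unitaryGroup_iff.mp U.2, one_mul]
      _ = (Aᴴ * B).trace := by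
        simp only [A, B, conjTranspose_mul, conjTranspose_conjTranspose, star_eq_conjTranspose,
          mul_assoc]
  have hA : Aᴴ * A ≤ star (U : Matrix n n ℂ) * (Y * Yᴴ) * U := by
    simpa only [A, mul_one, star_mul, star_eq_conjTranspose, conjTranspose_conjTranspose,
      conjTranspose_mul, mul_assoc] using star_left_conjugate_le_conjugate hV (Yᴴ * U)
  have hB : Bᴴ * B = star (U : Matrix n n ℂ) * (Xᴴ * X) * U := by
    simp only [B, conjTranspose_mul, star_eq_conjTranspose, mul_assoc]
  rw [traceNorm_eq_re_trace_cfc_sqrt, ← hVM, htr, trace, Complex.re_sum]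
  gcongr with i
  calc _ ≤ √((Aᴴ * A) i i).re * √((Bᴴ * B) i i).re := re_conjTranspose_mul_apply_le A B i
    _ ≤ _ := by
      rw [mul_comm, hB]
      exact mul_le_mul_of_nonneg_left (Real.sqrt_le_sqrt (re_apply_le_of_le hA i))
        (Real.sqrt_nonneg _)

lemma fidelity_le_sum_sqrt_mul_sqrt {ρ σ : Matrix n n ℂ} (hρ : ρ.PosSemidef) (hσ : σ.PosSemidef)
    (U : unitaryGroup n ℂ) :
    fidelity ρ σ ≤ ∑ i, √(measurementProb U ρ i) * √(measurementProb U σ i) := by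
  have hself (A : Matrix n n ℂ) : (cfc Real.sqrt A)ᴴ = cfc Real.sqrt A :=
    (cfc_predicate Real.sqrt A : IsSelfAdjoint _).star_eq
  rw [fidelity, psdSqrt_eq_cfc hρ, psdSqrt_eq_cfc hσ]
  simpa only [hself, cfc_sqrt_mul_self hρ.nonneg, cfc_sqrt_mul_self hσ.nonneg] using
    traceNorm_mul_le_sum_sqrt_mul_sqrt (cfc Real.sqrt ρ) (cfc Real.sqrt σ) U

end

/-- Fuchs–van de Graaf: `Δ(ρ,σ) ≤ √(1 - F(ρ,σ)²)` for density matrices. -/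
theorem stmt_0 {n : ℕ} (ρ σ : Matrix (Fin n) (Fin n) ℂ)
    (hρ : IsDensityMatrix ρ) (hσ : IsDensityMatrix σ) :
    traceDist ρ σ ≤ Real.sqrt (1 - fidelity ρ σ ^ 2) := by
  have hρσ := hρ.1.1.sub hσ.1.1
  set U := hρσ.eigenvectorUnitary
  have hF := fidelity_le_sum_sqrt_mul_sqrt hρ.1 hσ.1 U
  have hF2 := pow_le_pow_left₀ (fidelity_nonneg ρ σ) hF 2
  have hclassical := sq_sum_abs_sub_le Finset.univ (fun i _ => measurementProb_nonneg U hρ.1 i)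
    (fun i _ => measurementProb_nonneg U hσ.1 i)
  rw [sum_measurementProb, sum_measurementProb, hρ.2, hσ.2, Complex.one_re] at hclassical
  rw [traceDist_eq_sum_abs_sub hρσ]
  apply Real.le_sqrt_of_sq_le
  linarith
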